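/- Let T = (S,Σ,κ) be an STS, μ a probability measure on S, and B ∈ Σ with avoid-set B̃ and B̃̃ the avoid-set of B̃. Define, for n ∈ ℕ, q_n^Yes = Prob_μ(F≤n B̃̃) and q_n^No = Prob_μ(F≤n B̃). If T is PD(μ,B) and D(μ,B̃), then the sequence (q_n^Yes) is nondecreasing, the sequence (1 − q_n^No) is nonincreasing, q_n^Yes ≤ 1 − q_n^No for all n, and both sequences converge to Prob_μ(GF B); in particular lim_{n→∞}(q_n^Yes + q_n^No) = 1. -/

import Mathlib

/-!
Write `Ã = avoid P B`. A path measure disintegrates over the initial state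
(`P μ = μ.bind (P ∘ dirac)`), and the shifted path is again a chain
(`(P μ).map shift = P (μ.bind κ)`). Together these show that almost surely a path that enters
`avoid P D` never visits `D` afterwards; in particular it never leaves `Ã` once inside.
Under `PD(μ,B)` almost every path therefore visits `B` infinitely often or reaches `Ã`, and not
both, so `GF B` is a.s. the complement of `F Ã`. As `avoid P Ã` is disjoint from the absorbing
set `Ã`, decisiveness w.r.t. `Ã` makes `F (avoid P Ã)` a.s. the complement of `F Ã` too.
Since `F≤n` increases to `F`, `q_n^Yes` increases to `P(F (avoid P Ã)) = P(GF B)` and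
`1 - q_n^No` decreases to `1 - P(F Ã) = P(GF B)`.
-/

open MeasureTheory ProbabilityTheory ENNReal Filter Topology

namespace STS

variable {S : Type*} [MeasurableSpace S]

/-- Probability of the cylinder `Cyl(A 0, …, A n)` for the Markov chain with kernel `κ`
and initial distribution `μ`. -/
noncomputable def cylProb (κ : Kernel S S) : ℕ → Measure S → (ℕ → Set S) → ℝ≥0∞
  | 0, μ, A => μ (A 0)
  | n + 1, μ, A => ∫⁻ s in A 0, cylProb κ n (κ s) (fun i => A (i + 1)) ∂μ

/-- `P` assigns to each initial (probability) distribution the path measure (on `ℕ → S`,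
with the product σ-algebra) of the time-homogeneous Markov chain with transition kernel `κ`,
as given by the Ionescu–Tulcea construction: it is the unique probability measure giving
cylinders their prescribed probabilities. -/
def IsPathMeasure (κ : Kernel S S) (P : Measure S → Measure (ℕ → S)) : Prop :=
  ∀ μ : Measure S, IsProbabilityMeasure μ →
    IsProbabilityMeasure (P μ) ∧
    ∀ (n : ℕ) (A : ℕ → Set S), (∀ i, MeasurableSet (A i)) →
      P μ {ρ | ∀ i ≤ n, ρ i ∈ A i} = cylProb κ n μ A

/-- The path event `F B`: eventually reach `B`. -/
def evF (B : Set S) : Set (ℕ → S) := {ρ | ∃ k, ρ k ∈ B}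

/-- The path event `F≤n B`. -/
def evFle (n : ℕ) (B : Set S) : Set (ℕ → S) := {ρ | ∃ k ≤ n, ρ k ∈ B}

/-- The path event `F≥p B`. -/
def evFge (p : ℕ) (B : Set S) : Set (ℕ → S) := {ρ | ∃ k, p ≤ k ∧ ρ k ∈ B}

/-- The path event `GF B`: visit `B` infinitely often. -/
def evGF (B : Set S) : Set (ℕ → S) := {ρ | ∀ n, ∃ k, n ≤ k ∧ ρ k ∈ B}

/-- The path event `FG B`: eventually stay in `B` forever. -/
def evFG (B : Set S) : Set (ℕ → S) := {ρ | ∃ n, ∀ k, n ≤ k → ρ k ∈ B}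

/-- The until event `B' U B`. -/
def evU (B' B : Set S) : Set (ℕ → S) := {ρ | ∃ k, ρ k ∈ B ∧ ∀ j < k, ρ j ∈ B'}

/-- The bounded until event `B' U≤n B`. -/
def evUle (n : ℕ) (B' B : Set S) : Set (ℕ → S) := {ρ | ∃ k ≤ n, ρ k ∈ B ∧ ∀ j < k, ρ j ∈ B'}

/-- The avoid-set `B̃` of `B`: states from which `B` is reached with probability `0`. -/
def avoid (P : Measure S → Measure (ℕ → S)) (B : Set S) : Set S :=
  {s | P (Measure.dirac s) (evF B) = 0}

/-- `T` is decisive w.r.t. `B` from `μ`. -/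
def Decisive (P : Measure S → Measure (ℕ → S)) (μ : Measure S) (B : Set S) : Prop :=
  P μ (evF B ∪ evF (avoid P B)) = 1

/-- `T` is strongly decisive w.r.t. `B` from `μ`. -/
def StronglyDecisive (P : Measure S → Measure (ℕ → S)) (μ : Measure S) (B : Set S) : Prop :=
  P μ (evGF B ∪ evF (avoid P B)) = 1

/-- `T` is persistently decisive w.r.t. `B` from `μ`. -/
def PersistentlyDecisive (P : Measure S → Measure (ℕ → S)) (μ : Measure S) (B : Set S) : Prop :=
  ∀ p : ℕ, P μ (evFge p B ∪ evFge p (avoid P B)) = 1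

/-- `PreProb(B)`: measurable sets `B'` from which `B` is reached in one step with positive
probability, whatever the initial distribution concentrated on `B'`. -/
def PreProb (P : Measure S → Measure (ℕ → S)) (B : Set S) : Set (Set S) :=
  {B' | MeasurableSet B' ∧ ∀ μ' : Measure S, IsProbabilityMeasure μ' → μ' B' = 1 →
    0 < P μ' {ρ | ρ 0 ∈ B' ∧ ρ 1 ∈ B}}

/-- `T` is fair w.r.t. `B` from `μ`. -/
def Fair (P : Measure S → Measure (ℕ → S)) (μ : Measure S) (B : Set S) : Prop :=
  ∀ B' ∈ PreProb P B, 0 < P μ (evGF B') →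
    P μ (evGF B ∩ evGF B') = P μ (evGF B')

/-- The one-step measure transformer `Ω_T`. -/
noncomputable def Omega (κ : Kernel S S) (μ : Measure S) : Measure S :=
  μ.bind (fun s => κ s)

/-- Two measures are qualitatively equivalent if they have the same null (measurable) sets. -/
def QualEquiv {T : Type*} [MeasurableSpace T] (μ ν : Measure T) : Prop :=
  ∀ A : Set T, MeasurableSet A → (μ A = 0 ↔ ν A = 0)

/-- `T₂ = (S₂,κ₂)` is an `α`-abstraction of `T₁ = (S₁,κ₁)`. -/
def IsAbstraction {S₁ S₂ : Type*} [MeasurableSpace S₁] [MeasurableSpace S₂]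
    (κ₁ : Kernel S₁ S₁) (κ₂ : Kernel S₂ S₂) (α : S₁ → S₂) : Prop :=
  ∀ μ : Measure S₁, IsProbabilityMeasure μ →
    QualEquiv (Measure.map α (Omega κ₁ μ)) (Omega κ₂ (Measure.map α μ))

end STS

namespace STS

open Set

variable {S : Type*}

def shift (ρ : ℕ → S) : ℕ → S := fun i => ρ (i + 1)

lemma iterate_shift_apply (k : ℕ) (ρ : ℕ → S) (j : ℕ) : shift^[k] ρ j = ρ (j + k) := by
  induction k generalizing ρ with
  | zero => rfl
  | succ k ih => rw [Function.iterate_succ_apply, ih]; rfl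

lemma monotone_evFle (B : Set S) : Monotone fun n => evFle n B :=
  fun _ _ hmn _ ⟨k, hk, hkB⟩ => ⟨k, hk.trans hmn, hkB⟩

lemma iUnion_evFle (B : Set S) : ⋃ n, evFle n B = evF B := by
  ext ρ
  simp only [mem_iUnion, evFle, evF, mem_ofPred_eq]
  exact ⟨fun ⟨_, k, _, hk⟩ => ⟨k, hk⟩, fun ⟨k, hk⟩ => ⟨k, k, le_rfl, hk⟩⟩

variable [MeasurableSpace S]

lemma measurable_shift : Measurable (shift : (ℕ → S) → ℕ → S) :=
  measurable_pi_lambda _ fun i => measurable_pi_apply (i + 1)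

section Events

variable {B : Set S}

lemma measurableSet_evF (hB : MeasurableSet B) : MeasurableSet (evF B) := by
  simp only [evF, ofPred_exists]
  exact .iUnion fun k => measurable_pi_apply k hB

lemma measurableSet_evFle (hB : MeasurableSet B) (n : ℕ) : MeasurableSet (evFle n B) := by
  simp only [evFle, ofPred_exists, ofPred_and]
  exact .iUnion fun k => MeasurableSet.const _ |>.inter (measurable_pi_apply k hB)

lemma measurableSet_evFge (hB : MeasurableSet B) (p : ℕ) : MeasurableSet (evFge p B) := by
  simp only [evFge, ofPred_exists, ofPred_and]
  exact .iUnion fun k => MeasurableSet.const _ |>.inter (measurable_pi_apply k hB)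

end Events

lemma adjacent_of_iUnion_ae_eq_compl_iUnion {Ω : Type*} [MeasurableSpace Ω] (m : Measure Ω)
    [IsProbabilityMeasure m] {Y N : ℕ → Set Ω} (hY : Monotone Y) (hN : Monotone N)
    (hNm : ∀ n, MeasurableSet (N n)) (h : ⋃ n, Y n =ᵐ[m] (⋃ n, N n)ᶜ) :
    Monotone (fun n => m (Y n)) ∧ Antitone (fun n => 1 - m (N n)) ∧
      (∀ n, m (Y n) ≤ 1 - m (N n)) ∧
      Tendsto (fun n => m (Y n)) atTop (𝓝 (m (⋃ n, Y n))) ∧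
      Tendsto (fun n => 1 - m (N n)) atTop (𝓝 (m (⋃ n, Y n))) ∧
      Tendsto (fun n => m (Y n) + m (N n)) atTop (𝓝 1) := by
  have hlim : m (⋃ n, Y n) = 1 - m (⋃ n, N n) := by
    rw [measure_congr h]
    exact prob_compl_eq_one_sub (MeasurableSet.iUnion hNm)
  have hsum : m (⋃ n, Y n) + m (⋃ n, N n) = 1 := by
    rw [hlim, tsub_add_cancel_of_le prob_le_one]
  refine ⟨fun a b hab => measure_mono (hY hab),
    fun a b hab => tsub_le_tsub_left (measure_mono (hN hab)) 1, fun n => ?_,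
    tendsto_measure_iUnion_atTop hY, ?_, ?_⟩
  · calc m (Y n) ≤ m (⋃ n, Y n) := measure_mono (subset_iUnion Y n)
      _ = 1 - m (⋃ n, N n) := hlim
      _ ≤ 1 - m (N n) := tsub_le_tsub_left (measure_mono (subset_iUnion N n)) 1
  · rw [hlim]
    exact ENNReal.Tendsto.sub tendsto_const_nhds (tendsto_measure_iUnion_atTop hN)
      (Or.inl one_ne_top)
  · rw [← hsum]
    exact (tendsto_measure_iUnion_atTop hY).add (tendsto_measure_iUnion_atTop hN)

section Cylinders

lemma measurableSet_initCyl {n : ℕ} {A : ℕ → Set S} (hA : ∀ i, MeasurableSet (A i)) :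
    MeasurableSet {ρ : ℕ → S | ∀ i ≤ n, ρ i ∈ A i} :=
  MeasurableSet.pi (Iic n).to_countable fun i _ => hA i

lemma exists_eq_initCyl_of_mem_squareCylinders {E : Set (ℕ → S)}
    (hE : E ∈ squareCylinders fun _ => {A : Set S | MeasurableSet A}) :
    ∃ n, ∃ A : ℕ → Set S, (∀ i, MeasurableSet (A i)) ∧ E = {ρ | ∀ i ≤ n, ρ i ∈ A i} := by
  classical
  obtain ⟨s, t, ht, rfl⟩ := hE
  refine ⟨s.sup id, fun i => if i ∈ s then t i else univ, fun i => ?_, ?_⟩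
  · dsimp only
    split_ifs
    exacts [ht i (mem_univ i), .univ]
  · ext ρ
    refine ⟨fun h i _ => ?_, fun h i (hi : i ∈ s) => ?_⟩
    · dsimp only
      split_ifs with hi
      exacts [h i hi, trivial]
    · simpa [hi] using h i (Finset.le_sup (f := id) hi)

lemma isPiSystem_squareCylinders_measurableSet :
    IsPiSystem (squareCylinders fun (_ : ℕ) => {A : Set S | MeasurableSet A}) :=
  isPiSystem_squareCylinders (fun _ => MeasurableSpace.isPiSystem_measurableSet) fun _ => .univ

lemma ext_of_initCyl {m₁ m₂ : Measure (ℕ → S)} [IsFiniteMeasure m₁]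
    (h : ∀ n (A : ℕ → Set S), (∀ i, MeasurableSet (A i)) →
      m₁ {ρ | ∀ i ≤ n, ρ i ∈ A i} = m₂ {ρ | ∀ i ≤ n, ρ i ∈ A i}) :
    m₁ = m₂ := by
  refine ext_of_generate_finite _ generateFrom_squareCylinders.symm
    isPiSystem_squareCylinders_measurableSet (fun E hE => ?_) ?_
  · obtain ⟨n, A, hA, rfl⟩ := exists_eq_initCyl_of_mem_squareCylinders hE
    exact h n A hA
  · simpa using h 0 (fun _ => univ) fun _ => .univ

lemma measurable_of_initCyl {α : Type*} [MeasurableSpace α] {f : α → Measure (ℕ → S)}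
    [∀ a, IsProbabilityMeasure (f a)]
    (h : ∀ n (A : ℕ → Set S), (∀ i, MeasurableSet (A i)) →
      Measurable fun a => f a {ρ | ∀ i ≤ n, ρ i ∈ A i}) :
    Measurable f :=
  .measure_of_isPiSystem_of_isProbabilityMeasure generateFrom_squareCylinders.symm
    isPiSystem_squareCylinders_measurableSet fun E hE => by
      obtain ⟨n, A, hA, rfl⟩ := exists_eq_initCyl_of_mem_squareCylinders hE
      exact h n A hA

end Cylinders

section CylProb

variable (κ : Kernel S S) [IsSFiniteKernel κ]

lemma measurable_cylProb (n : ℕ) {A : ℕ → Set S} (hA : ∀ i, MeasurableSet (A i))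
    (η : Kernel S S) [IsSFiniteKernel η] : Measurable fun s => cylProb κ n (η s) A := by
  induction n generalizing A η with
  | zero => exact η.measurable_coe (hA 0)
  | succ n ih => exact (ih (fun i => hA (i + 1)) κ).setLIntegral_kernel (hA 0)

lemma cylProb_bind (n : ℕ) {A : ℕ → Set S} (hA : ∀ i, MeasurableSet (A i))
    (μ : Measure S) (η : Kernel S S) [IsSFiniteKernel η] :
    cylProb κ n (μ.bind η) A = ∫⁻ s, cylProb κ n (η s) A ∂μ := by
  cases n with
  | zero => exact Measure.bind_apply (hA 0) η.aemeasurable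
  | succ n =>
    have hf := measurable_cylProb κ n (fun i => hA (i + 1)) κ
    simp only [cylProb]
    rw [← lintegral_indicator (hA 0),
      Measure.lintegral_bind η.aemeasurable (hf.indicator (hA 0)).aemeasurable]
    simp_rw [lintegral_indicator (hA 0)]

end CylProb

namespace IsPathMeasure

variable {κ : Kernel S S} {P : Measure S → Measure (ℕ → S)} (hP : IsPathMeasure κ P)
include hP

lemma isProbabilityMeasure (μ : Measure S) [hμ : IsProbabilityMeasure μ] :
    IsProbabilityMeasure (P μ) :=
  (hP μ hμ).1

lemma apply_initCyl (μ : Measure S) [hμ : IsProbabilityMeasure μ] {n : ℕ} {A : ℕ → Set S}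
    (hA : ∀ i, MeasurableSet (A i)) :
    P μ {ρ | ∀ i ≤ n, ρ i ∈ A i} = cylProb κ n μ A :=
  (hP μ hμ).2 n A hA

lemma measure_coord_zero (μ : Measure S) [IsProbabilityMeasure μ] {C : Set S}
    (hC : MeasurableSet C) : P μ {ρ | ρ 0 ∈ C} = μ C := by
  simpa [cylProb] using hP.apply_initCyl μ (n := 0) (A := fun _ => C) fun _ => hC

lemma measurable_dirac [IsSFiniteKernel κ] : Measurable fun s => P (Measure.dirac s) := by
  have := fun s => hP.isProbabilityMeasure (Measure.dirac s)
  refine measurable_of_initCyl fun n A hA => ?_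
  simpa only [hP.apply_initCyl _ hA, Kernel.id_apply] using measurable_cylProb κ n hA Kernel.id

lemma eq_bind [IsSFiniteKernel κ] (μ : Measure S) [IsProbabilityMeasure μ] :
    P μ = μ.bind fun s => P (Measure.dirac s) := by
  have := hP.isProbabilityMeasure μ
  refine ext_of_initCyl fun n A hA => ?_
  rw [Measure.bind_apply (measurableSet_initCyl hA) hP.measurable_dirac.aemeasurable,
    hP.apply_initCyl μ hA]
  simp_rw [hP.apply_initCyl _ hA]
  have hid : ⇑(Kernel.id : Kernel S S) = Measure.dirac := funext Kernel.id_apply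
  simpa only [hid, Measure.bind_dirac] using cylProb_bind κ n hA μ Kernel.id

lemma map_shift [IsMarkovKernel κ] (μ : Measure S) [IsProbabilityMeasure μ] :
    (P μ).map shift = P (μ.bind κ) := by
  have := hP.isProbabilityMeasure μ
  refine ext_of_initCyl fun n A hA => ?_
  classical
  set A' : ℕ → Set S := fun i => if i = 0 then univ else A (i - 1)
  have hA' : ∀ i, MeasurableSet (A' i) := fun i => by
    dsimp only [A']
    split_ifs
    exacts [.univ, hA _]
  have hpre : shift ⁻¹' {ρ | ∀ i ≤ n, ρ i ∈ A i} = {ρ | ∀ i ≤ n + 1, ρ i ∈ A' i} := by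
    ext ρ
    refine ⟨fun h i hi => ?_, fun h i hi => by simpa [A', shift] using h (i + 1) (by omega)⟩
    rcases i with _ | i
    · simp [A']
    · simpa [A', shift] using h i (by omega)
  rw [Measure.map_apply measurable_shift (measurableSet_initCyl hA), hpre,
    hP.apply_initCyl μ hA', hP.apply_initCyl _ hA, cylProb_bind κ n hA]
  simp [cylProb, A']

lemma exists_map_iterate_shift [IsMarkovKernel κ] (k : ℕ) (μ : Measure S)
    [IsProbabilityMeasure μ] :
    ∃ ν, IsProbabilityMeasure ν ∧ (P μ).map shift^[k] = P ν := by
  induction k generalizing μ with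
  | zero => exact ⟨μ, ‹_›, Measure.map_id⟩
  | succ k ih =>
    obtain ⟨ν, hν, h⟩ := ih (μ.bind κ)
    refine ⟨ν, hν, ?_⟩
    rw [Function.iterate_succ, ← Measure.map_map (measurable_shift.iterate k) measurable_shift,
      hP.map_shift, h]

lemma ae_dirac_eq_zero [IsSFiniteKernel κ] (μ : Measure S) [IsProbabilityMeasure μ]
    {E : Set (ℕ → S)} (hE : MeasurableSet E) (h : P μ E = 0) :
    ∀ᵐ s ∂μ, P (Measure.dirac s) E = 0 := by
  rw [hP.eq_bind μ, Measure.bind_apply hE hP.measurable_dirac.aemeasurable] at h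
  exact (lintegral_eq_zero_iff ((Measure.measurable_coe hE).comp hP.measurable_dirac)).1 h

lemma measurableSet_avoid [IsSFiniteKernel κ] {D : Set S} (hD : MeasurableSet D) :
    MeasurableSet (avoid P D) :=
  (Measure.measurable_coe (measurableSet_evF hD)).comp hP.measurable_dirac
    (measurableSet_singleton 0)

lemma disjoint_avoid {D : Set S} (hD : MeasurableSet D) : Disjoint (avoid P D) D := by
  refine disjoint_left.2 fun s (hs : P _ _ = 0) hsD => ?_
  have hcoord : P (Measure.dirac s) {ρ | ρ 0 ∈ D} = 1 := by
    rw [hP.measure_coord_zero _ hD, Measure.dirac_apply_of_mem hsD]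
  have := measure_mono_null (fun ρ hρ => ⟨0, hρ⟩ : {ρ | ρ 0 ∈ D} ⊆ evF D) hs
  exact one_ne_zero (hcoord ▸ this)

lemma measure_coord_zero_mem_avoid_inter_evF [IsSFiniteKernel κ] {D : Set S}
    (hD : MeasurableSet D) (ν : Measure S) [IsProbabilityMeasure ν] :
    P ν ({ρ | ρ 0 ∈ avoid P D} ∩ evF D) = 0 := by
  have hA := hP.measurableSet_avoid hD
  have hE : MeasurableSet ({ρ : ℕ → S | ρ 0 ∈ avoid P D} ∩ evF D) :=
    (measurable_pi_apply 0 hA).inter (measurableSet_evF hD)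
  have hpoint : ∀ s, P (Measure.dirac s) ({ρ | ρ 0 ∈ avoid P D} ∩ evF D) = 0 := fun s => by
    by_cases hs : s ∈ avoid P D
    · exact measure_mono_null inter_subset_right hs
    · refine measure_mono_null inter_subset_left ?_
      rw [hP.measure_coord_zero _ hA, Measure.dirac_apply' _ hA, indicator_of_notMem hs]
  rw [hP.eq_bind ν, Measure.bind_apply hE hP.measurable_dirac.aemeasurable]
  simp [hpoint]

lemma ae_forall_notMem_of_mem_avoid [IsMarkovKernel κ] {D : Set S} (hD : MeasurableSet D)
    (μ : Measure S) [IsProbabilityMeasure μ] :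
    ∀ᵐ ρ ∂P μ, ∀ k, ρ k ∈ avoid P D → ∀ j, k ≤ j → ρ j ∉ D := by
  refine ae_all_iff.2 fun k => ?_
  obtain ⟨ν, hν, hmap⟩ := hP.exists_map_iterate_shift k μ
  have h0 : ∀ᵐ ρ ∂P ν, ρ 0 ∈ avoid P D → ρ ∉ evF D :=
    measure_mono_null (fun ρ hρ => by simpa using hρ)
      (hP.measure_coord_zero_mem_avoid_inter_evF hD ν)
  rw [← hmap] at h0
  filter_upwards [ae_of_ae_map (measurable_shift.iterate k).aemeasurable h0] with ρ hρ hk j hkj hj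
  refine hρ (by rwa [iterate_shift_apply, zero_add]) ⟨j - k, ?_⟩
  rwa [iterate_shift_apply, Nat.sub_add_cancel hkj]

lemma avoid_subset_avoid_compl_avoid [IsMarkovKernel κ] {D : Set S} (hD : MeasurableSet D) :
    avoid P D ⊆ avoid P (avoid P D)ᶜ := by
  intro s (hs : P _ _ = 0)
  have hA := hP.measurableSet_avoid hD
  show P (Measure.dirac s) (evF (avoid P D)ᶜ) = 0
  simp only [evF, ofPred_exists]
  refine measure_iUnion_null fun j => ?_
  obtain ⟨ν, hν, hmap⟩ := hP.exists_map_iterate_shift j (Measure.dirac s)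
  have hmap_apply : ∀ E, MeasurableSet E → P ν E = P (Measure.dirac s) (shift^[j] ⁻¹' E) :=
    fun E hE => by rw [← hmap, Measure.map_apply (measurable_shift.iterate j) hE]
  have hνF : P ν (evF D) = 0 := by
    rw [hmap_apply _ (measurableSet_evF hD)]
    refine measure_mono_null (fun ρ (hρ : ∃ m, _) => ?_) hs
    obtain ⟨m, hm⟩ := hρ
    exact ⟨m + j, by rwa [iterate_shift_apply] at hm⟩
  have hνA : ν (avoid P D)ᶜ = 0 := ae_iff.1 (hP.ae_dirac_eq_zero ν (measurableSet_evF hD) hνF)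
  have := hmap_apply {ρ | ρ 0 ∈ (avoid P D)ᶜ} (measurable_pi_apply 0 hA.compl)
  rw [hP.measure_coord_zero ν hA.compl, hνA] at this
  simpa [iterate_shift_apply] using this.symm

lemma ae_forall_mem_avoid_of_mem_avoid [IsMarkovKernel κ] {D : Set S} (hD : MeasurableSet D)
    (μ : Measure S) [IsProbabilityMeasure μ] :
    ∀ᵐ ρ ∂P μ, ∀ k, ρ k ∈ avoid P D → ∀ j, k ≤ j → ρ j ∈ avoid P D := by
  filter_upwards [hP.ae_forall_notMem_of_mem_avoid (hP.measurableSet_avoid hD).compl μ]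
    with ρ hρ k hk j hkj
  simpa using hρ k (hP.avoid_subset_avoid_compl_avoid hD hk) j hkj

lemma evGF_ae_eq_compl_evF_avoid [IsMarkovKernel κ] {B : Set S} (hB : MeasurableSet B)
    (μ : Measure S) [IsProbabilityMeasure μ] (hpd : PersistentlyDecisive P μ B) :
    evGF B =ᵐ[P μ] (evF (avoid P B))ᶜ := by
  have := hP.isProbabilityMeasure μ
  have hA := hP.measurableSet_avoid hB
  have hdec : ∀ᵐ ρ ∂P μ, ∀ p, ρ ∈ evFge p B ∪ evFge p (avoid P B) := ae_all_iff.2 fun p =>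
    (mem_ae_iff_prob_eq_one ((measurableSet_evFge hB p).union (measurableSet_evFge hA p))).2
      (hpd p)
  filter_upwards [hdec, hP.ae_forall_notMem_of_mem_avoid hB μ] with ρ hdec hnever
  refine propext ⟨fun hGF ⟨k, hk⟩ => ?_, fun hnA n => ?_⟩
  · obtain ⟨j, hkj, hj⟩ := hGF k
    exact hnever k hk j hkj hj
  · rcases hdec n with ⟨k, hnk, hk⟩ | ⟨k, -, hk⟩
    exacts [⟨k, hnk, hk⟩, absurd ⟨k, hk⟩ hnA]

lemma evF_avoid_avoid_ae_eq_compl [IsMarkovKernel κ] {B : Set S} (hB : MeasurableSet B)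
    (μ : Measure S) [IsProbabilityMeasure μ] (hd : Decisive P μ (avoid P B)) :
    evF (avoid P (avoid P B)) =ᵐ[P μ] (evF (avoid P B))ᶜ := by
  have := hP.isProbabilityMeasure μ
  have hA := hP.measurableSet_avoid hB
  have hdec : ∀ᵐ ρ ∂P μ, ρ ∈ evF (avoid P B) ∪ evF (avoid P (avoid P B)) :=
    (mem_ae_iff_prob_eq_one ((measurableSet_evF hA).union
      (measurableSet_evF (hP.measurableSet_avoid hA)))).2 hd
  filter_upwards [hdec, hP.ae_forall_notMem_of_mem_avoid hA μ,
    hP.ae_forall_mem_avoid_of_mem_avoid hB μ] with ρ hdec hnever hstay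
  refine propext ⟨fun ⟨k, hk⟩ ⟨j, hj⟩ => ?_, hdec.resolve_left⟩
  rcases le_total k j with hkj | hjk
  · exact hnever k hk j hkj hj
  · exact disjoint_left.1 (hP.disjoint_avoid hA) hk (hstay j hj k hjk)

end IsPathMeasure

/-- approximation scheme for repeated reachability: under `PD(μ,B)` and
`D(μ,B̃)`, the sequences `q_n^Yes = Prob_μ(F≤n B̃̃)` and `1 − q_n^No`
(with `q_n^No = Prob_μ(F≤n B̃)`) are adjacent and both converge to `Prob_μ(GF B)`. -/
theorem statement_19 {S : Type*} [MeasurableSpace S]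
    (κ : Kernel S S) [IsMarkovKernel κ]
    (P : Measure S → Measure (ℕ → S)) (hP : IsPathMeasure κ P)
    (μ : Measure S) (hμ : IsProbabilityMeasure μ)
    (B : Set S) (hB : MeasurableSet B)
    (hpd : PersistentlyDecisive P μ B)
    (hd : Decisive P μ (avoid P B)) :
    Monotone (fun n : ℕ => P μ (evFle n (avoid P (avoid P B)))) ∧
    Antitone (fun n : ℕ => 1 - P μ (evFle n (avoid P B))) ∧
    (∀ n : ℕ, P μ (evFle n (avoid P (avoid P B))) ≤ 1 - P μ (evFle n (avoid P B))) ∧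
    Tendsto (fun n : ℕ => P μ (evFle n (avoid P (avoid P B)))) atTop (𝓝 (P μ (evGF B))) ∧
    Tendsto (fun n : ℕ => 1 - P μ (evFle n (avoid P B))) atTop (𝓝 (P μ (evGF B))) ∧
    Tendsto (fun n : ℕ => P μ (evFle n (avoid P (avoid P B))) + P μ (evFle n (avoid P B)))
      atTop (𝓝 1) := by
  have := hP.isProbabilityMeasure μ
  have hGF := hP.evGF_ae_eq_compl_evF_avoid hB μ hpd
  have hYes := hP.evF_avoid_avoid_ae_eq_compl hB μ hd
  have h := adjacent_of_iUnion_ae_eq_compl_iUnion (P μ) (monotone_evFle (avoid P (avoid P B)))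
    (monotone_evFle (avoid P B)) (measurableSet_evFle (hP.measurableSet_avoid hB))
    (by rwa [iUnion_evFle, iUnion_evFle])
  rwa [iUnion_evFle, measure_congr (hYes.trans hGF.symm)] at h

end STS
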